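/- arXiv:2507.19215 — 2 statements merged into one kernel-verified Lean document; each statement's English description precedes it below -/
import Mathlib

section
/- Let X be a Polish space with metric d, let μ, ν be Borel probability measures on X, and let φ : X → [0,∞) be Borel measurable. Then the weighted total variation satisfies TV_φ(μ, ν) := ∫_X φ(x) |μ − ν|(dx) ≤ (1 + log ∫_X e^{φ(x)²} μ(dx))^{1/2} · √(2 H(ν | μ)). -/
/-!
Write `F = dν/dμ`, so that `|μ - ν| = |F - 1| μ` and the left side is `∫ φ |F - 1| dμ`. For a
weight `w = c F + d > 0`, Cauchy–Schwarz bounds it by `(∫ φ² w dμ)^{1/2} (∫ (F - 1)² / w dμ)^{1/2}`.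
The Donsker–Varadhan inequality `∫ G dν ≤ H(ν | μ) + log ∫ e^G dμ`, applied to `G = φ²` under `ν`
and under `μ`, bounds the first factor by `c (H + L) + d L` with `L = log ∫ e^{φ²} dμ`.
For `H ≤ 3` take `w = 2F + 4`: the pointwise bound `3 (s - 1)² ≤ (2s + 4)(s log s - s + 1)` makes
the second factor at most `H / 3`. For `H ≥ 2` take `w = F + 1`: as `|F - 1| ≤ F + 1`, the second
factor is at most `∫ (F + 1) dμ = 2`. Either way the product is at most `2 (1 + L) H`.
Everything is done in `ℝ≥0∞`, so infinite entropy or exponential moment need no separate case.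
-/

open MeasureTheory ProbabilityTheory MeasurableSpace
open scoped Classical
open scoped ENNReal

noncomputable section

lemma probToFin {α : Type*} [MeasurableSpace α] {μ : Measure α}
    (h : IsProbabilityMeasure μ) : IsFiniteMeasure μ := by
  haveI := h; infer_instance

/-- Relative entropy `H(ν | μ) = ∫ log (dν/dμ) dν` if `ν ≪ μ` (with value `∞` if the
integral is not finite), and `H(ν | μ) = ∞` otherwise. -/
def relEntropy {α : Type*} [MeasurableSpace α] (ν μ : Measure α) : ℝ≥0∞ :=
  if ν ≪ μ ∧ Integrable (fun x => Real.log (ν.rnDeriv μ x).toReal) ν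
  then ENNReal.ofReal (∫ x, Real.log (ν.rnDeriv μ x).toReal ∂ν)
  else ∞

/-- Extended logarithm on `ℝ≥0∞` (used only on arguments `≥ 1`). -/
def elog (x : ℝ≥0∞) : ℝ≥0∞ :=
  if x = ∞ then ∞ else ENNReal.ofReal (Real.log x.toReal)

/-- Total variation measure `|μ - ν|` of the signed measure `μ - ν`. -/
def tvMeasure {α : Type*} [MeasurableSpace α] (μ ν : Measure α)
    [IsFiniteMeasure μ] [IsFiniteMeasure ν] : Measure α :=
  (μ.toSignedMeasure - ν.toSignedMeasure).totalVariation

/-- `π` is a coupling of `μ` and `ν`. -/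
def IsCoupling {α : Type*} [MeasurableSpace α] (μ ν : Measure α)
    (π : Measure (α × α)) : Prop :=
  π.map Prod.fst = μ ∧ π.map Prod.snd = ν

section

open Real Set InformationTheory
open scoped NNReal

lemma mul_le_klFun_add_exp_sub_one {s : ℝ} (hs : 0 ≤ s) (t : ℝ) :
    s * t ≤ klFun s + (exp t - 1) := by
  rcases hs.eq_or_lt with rfl | hs
  · simp [klFun_zero, (exp_pos t).le]
  have h := mul_le_mul_of_nonneg_left (add_one_le_exp (t - log s)) hs.le
  rw [exp_sub, exp_log hs, mul_div_cancel₀ _ hs.ne'] at h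
  rw [klFun_apply]
  linarith

lemma monotoneOn_add_one_mul_log_sub :
    MonotoneOn (fun s ↦ (s + 1) * log s - 2 * (s - 1)) (Ioi 0) := by
  refine monotoneOn_of_hasDerivWithinAt_nonneg (f' := fun s ↦ log s + s⁻¹ - 1) (convex_Ioi 0)
    (fun s hs ↦ ?_) (fun s hs ↦ ?_) (fun s hs ↦ ?_) <;> simp only [interior_Ioi, mem_Ioi] at *
  · exact (ContinuousAt.continuousWithinAt (by fun_prop (disch := exact hs.ne')))
  · have := (((hasDerivAt_id s).add_const 1).mul (hasDerivAt_log hs.ne')).sub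
      (((hasDerivAt_id s).sub_const 1).const_mul 2)
    refine (this.congr_deriv ?_).hasDerivWithinAt
    simp only [id]
    field_simp
    ring
  · linarith [one_sub_inv_le_log_of_pos hs]

lemma hasDerivAt_mul_klFun_sub_sq {s : ℝ} (hs : 0 < s) :
    HasDerivAt (fun s ↦ (2 * s + 4) * klFun s - 3 * (s - 1) ^ 2)
      (4 * ((s + 1) * log s - 2 * (s - 1))) s := by
  have := (((hasDerivAt_id s).const_mul 2).add_const 4).mul (hasDerivAt_klFun hs.ne') |>.sub
    ((((hasDerivAt_id s).sub_const 1).pow 2).const_mul 3)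
  refine this.congr_deriv ?_
  simp only [klFun_apply, id]
  ring

/-- The difference of the two sides has a derivative of the sign of `s - 1`
(`monotoneOn_add_one_mul_log_sub`), so it is minimal at `s = 1`, where it vanishes. -/
lemma three_mul_sq_sub_one_le_klFun {s : ℝ} (hs : 0 ≤ s) :
    3 * (s - 1) ^ 2 ≤ (2 * s + 4) * klFun s := by
  set g : ℝ → ℝ := fun s ↦ (2 * s + 4) * klFun s - 3 * (s - 1) ^ 2
  set g' : ℝ → ℝ := fun s ↦ 4 * ((s + 1) * log s - 2 * (s - 1))
  have hg_cont : Continuous g := by fun_prop (disch := exact continuous_klFun)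
  have hg_one : g 1 = 0 := by simp [g, klFun_one]
  have hk {x y : ℝ} (hx : 0 < x) (hy : 0 < y) (hxy : x ≤ y) :=
    monotoneOn_add_one_mul_log_sub hx hy hxy
  suffices 0 ≤ g s by simp only [g] at this; linarith
  rcases le_total s 1 with h1 | h1
  · have : AntitoneOn g (Icc 0 1) := by
      refine antitoneOn_of_hasDerivWithinAt_nonpos (f' := g') (convex_Icc 0 1)
        hg_cont.continuousOn (fun x hx ↦ ?_) (fun x hx ↦ ?_) <;> rw [interior_Icc] at hx
      · exact (hasDerivAt_mul_klFun_sub_sq hx.1).hasDerivWithinAt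
      · have := hk hx.1 zero_lt_one hx.2.le
        simp only [log_one] at this
        linarith
    exact hg_one ▸ this ⟨hs, h1⟩ ⟨zero_le_one, le_rfl⟩ h1
  · have : MonotoneOn g (Ici 1) := by
      refine monotoneOn_of_hasDerivWithinAt_nonneg (f' := g') (convex_Ici 1)
        hg_cont.continuousOn (fun x hx ↦ ?_) (fun x hx ↦ ?_) <;> rw [interior_Ici] at hx
      · exact (hasDerivAt_mul_klFun_sub_sq (zero_lt_one.trans hx)).hasDerivWithinAt
      · have := hk zero_lt_one (zero_lt_one.trans hx) hx.le
        simp only [log_one] at this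
        linarith
    exact hg_one ▸ this self_mem_Ici h1 h1

variable {α : Type*} {mα : MeasurableSpace α} {μ ν : Measure α}

lemma relEntropy_eq_klDiv [IsProbabilityMeasure μ] [IsProbabilityMeasure ν] :
    relEntropy ν μ = klDiv ν μ := by
  unfold relEntropy
  split_ifs with h
  · simp [klDiv_of_ac_of_integrable h.1 h.2, llr]
  · exact (klDiv_eq_top_iff.mpr fun hνμ hint ↦ h ⟨hνμ, hint⟩).symm

lemma lintegral_ofReal_eq_lintegral_toReal_rnDeriv_mul [SigmaFinite μ] [SigmaFinite ν]
    (hνμ : ν ≪ μ) {g : α → ℝ} (hg : Measurable g) :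
    ∫⁻ x, ENNReal.ofReal (g x) ∂ν = ∫⁻ x, ENNReal.ofReal ((ν.rnDeriv μ x).toReal * g x) ∂μ := by
  rw [← lintegral_rnDeriv_mul hνμ hg.ennreal_ofReal.aemeasurable]
  refine lintegral_congr_ae ?_
  filter_upwards [Measure.rnDeriv_lt_top ν μ] with x hx
  rw [ENNReal.ofReal_mul ENNReal.toReal_nonneg, ENNReal.ofReal_toReal hx.ne]

lemma tvMeasure_eq_withDensity [IsFiniteMeasure μ] [IsFiniteMeasure ν] (hνμ : ν ≪ μ) :
    tvMeasure μ ν = μ.withDensity (fun x ↦ (1 - ν.rnDeriv μ x) + (ν.rnDeriv μ x - 1)) := by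
  set f := ν.rnDeriv μ
  have hf : Measurable f := Measure.measurable_rnDeriv ν μ
  have : IsFiniteMeasure (μ.withDensity fun x ↦ 1 - f x) :=
    isFiniteMeasure_withDensity <| ne_top_of_le_ne_top (measure_ne_top μ univ) <|
      (lintegral_mono fun _ ↦ tsub_le_self).trans_eq lintegral_one
  have : IsFiniteMeasure (μ.withDensity fun x ↦ f x - 1) :=
    isFiniteMeasure_withDensity <| ne_top_of_le_ne_top (measure_ne_top ν univ) <|
      (lintegral_mono fun _ ↦ tsub_le_self).trans_eq (Measure.lintegral_rnDeriv hνμ)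
  have hsingular : (μ.withDensity fun x ↦ 1 - f x) ⟂ₘ μ.withDensity fun x ↦ f x - 1 := by
    refine ⟨{x | 1 ≤ f x}, measurableSet_le measurable_const hf, ?_, ?_⟩ <;>
      rw [withDensity_apply_eq_zero' (by fun_prop)] <;> convert measure_empty (μ := μ) <;>
      ext x <;> simp +contextual [tsub_eq_zero_iff_le, le_of_lt]
  have hsum : μ + μ.withDensity (fun x ↦ f x - 1) = μ.withDensity (fun x ↦ 1 - f x) + ν :=
    calc μ + μ.withDensity (fun x ↦ f x - 1) = μ.withDensity (1 + fun x ↦ f x - 1) := by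
          rw [withDensity_add_left measurable_one, withDensity_one]
      _ = μ.withDensity ((fun x ↦ 1 - f x) + f) := by
          congr 1
          ext x
          simp [add_tsub_eq_max, tsub_add_eq_max]
      _ = μ.withDensity (fun x ↦ 1 - f x) + ν := by
          rw [withDensity_add_left (by fun_prop), Measure.withDensity_rnDeriv_eq ν μ hνμ]
  have hjordan : (μ.toSignedMeasure - ν.toSignedMeasure).toJordanDecomposition =
      ⟨_, _, hsingular⟩ := by
    refine SignedMeasure.toJordanDecomposition_eq ?_
    rw [JordanDecomposition.toSignedMeasure, sub_eq_sub_iff_add_eq_add,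
      ← Measure.toSignedMeasure_add, ← Measure.toSignedMeasure_add]
    exact Measure.toSignedMeasure_eq_toSignedMeasure_iff.mpr hsum
  rw [tvMeasure, SignedMeasure.totalVariation, hjordan]
  exact (withDensity_add_left (by fun_prop) _).symm

lemma one_sub_ofReal_add_ofReal_sub_one {r : ℝ} (hr : 0 ≤ r) :
    (1 - ENNReal.ofReal r) + (ENNReal.ofReal r - 1) = ENNReal.ofReal |r - 1| := by
  rw [← ENNReal.ofReal_one, ← ENNReal.ofReal_sub _ hr, ← ENNReal.ofReal_sub _ zero_le_one]
  rcases le_total r 1 with h | h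
  · simp [abs_of_nonpos (sub_nonpos.mpr h), h]
  · simp [abs_of_nonneg (sub_nonneg.mpr h), h]

lemma lintegral_tvMeasure [IsFiniteMeasure μ] [IsFiniteMeasure ν] (hνμ : ν ≪ μ) {g : α → ℝ}
    (hg : Measurable g) :
    ∫⁻ x, ENNReal.ofReal (g x) ∂(tvMeasure μ ν)
      = ∫⁻ x, ENNReal.ofReal (g x * |(ν.rnDeriv μ x).toReal - 1|) ∂μ := by
  rw [tvMeasure_eq_withDensity hνμ, lintegral_withDensity_eq_lintegral_mul _ (by fun_prop)
    hg.ennreal_ofReal]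
  refine lintegral_congr_ae ?_
  filter_upwards [Measure.rnDeriv_lt_top ν μ] with x hx
  rw [Pi.mul_apply, mul_comm, ENNReal.ofReal_mul' (abs_nonneg _), ← ENNReal.ofReal_toReal hx.ne,
    one_sub_ofReal_add_ofReal_sub_one ENNReal.toReal_nonneg,
    ENNReal.toReal_ofReal ENNReal.toReal_nonneg]

/-- Donsker–Varadhan: integrate Young's inequality `F (G - L) ≤ klFun F + e^(G - L) - 1` at
`F = dν/dμ` and `L = log ∫ e^G dμ`. -/
theorem lintegral_ofReal_le_klDiv_add_elog [IsProbabilityMeasure μ] [IsProbabilityMeasure ν]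
    {G : α → ℝ} (hG : Measurable G) (hG0 : ∀ x, 0 ≤ G x) :
    ∫⁻ x, ENNReal.ofReal (G x) ∂ν ≤ klDiv ν μ + elog (∫⁻ x, ENNReal.ofReal (exp (G x)) ∂μ) := by
  by_cases hνμ : ν ≪ μ
  swap; · simp [klDiv_of_not_ac hνμ]
  set M := ∫⁻ x, ENNReal.ofReal (exp (G x)) ∂μ
  by_cases hM : M = ∞
  · simp [elog, hM]
  have hM1 : 1 ≤ M := calc
    1 = ∫⁻ _, 1 ∂μ := by simp
    _ ≤ M := lintegral_mono fun x ↦ ENNReal.one_le_ofReal.mpr (one_le_exp (hG0 x))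
  set m := M.toReal
  have hm : 1 ≤ m := by simpa using ENNReal.toReal_mono hM hM1
  have hL : 0 ≤ log m := log_nonneg hm
  have h_normalized : ∫⁻ x, ENNReal.ofReal (exp (G x) / m) ∂μ = 1 := by
    simp_rw [div_eq_mul_inv, ENNReal.ofReal_mul (exp_pos _).le]
    rw [lintegral_mul_const _ (by fun_prop)]
    change M * _ = 1
    rw [← ENNReal.ofReal_toReal hM,
      ← ENNReal.ofReal_mul (by positivity), mul_inv_cancel₀ (by positivity), ENNReal.ofReal_one]
  have h_young (x : α) : (ν.rnDeriv μ x).toReal * G x + 1 ≤ klFun (ν.rnDeriv μ x).toReal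
      + (ν.rnDeriv μ x).toReal * log m + exp (G x) / m := by
    have := mul_le_klFun_add_exp_sub_one (ENNReal.toReal_nonneg (a := ν.rnDeriv μ x)) (G x - log m)
    rw [exp_sub, exp_log (by positivity)] at this
    linarith
  rw [← ENNReal.add_le_add_iff_right ENNReal.one_ne_top]
  calc ∫⁻ x, ENNReal.ofReal (G x) ∂ν + 1
      = ∫⁻ x, ENNReal.ofReal ((ν.rnDeriv μ x).toReal * G x + 1) ∂μ := by
        simp_rw [ENNReal.ofReal_add (mul_nonneg ENNReal.toReal_nonneg (hG0 _)) zero_le_one,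
          ENNReal.ofReal_one]
        rw [lintegral_add_right _ measurable_const, lintegral_const, measure_univ, one_mul,
          lintegral_ofReal_eq_lintegral_toReal_rnDeriv_mul hνμ hG]
    _ ≤ ∫⁻ x, (ENNReal.ofReal (klFun (ν.rnDeriv μ x).toReal)
          + ENNReal.ofReal ((ν.rnDeriv μ x).toReal * log m)
          + ENNReal.ofReal (exp (G x) / m)) ∂μ := by
        refine lintegral_mono fun x ↦ ?_
        have hklFun := klFun_nonneg (ENNReal.toReal_nonneg (a := ν.rnDeriv μ x))
        have hlog := mul_nonneg (ENNReal.toReal_nonneg (a := ν.rnDeriv μ x)) hL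
        rw [← ENNReal.ofReal_add hklFun hlog, ← ENNReal.ofReal_add (by positivity) (by positivity)]
        exact ENNReal.ofReal_le_ofReal (h_young x)
    _ = klDiv ν μ + elog M + 1 := by
        rw [lintegral_add_left (by fun_prop), lintegral_add_left (by fun_prop), h_normalized,
          ← lintegral_ofReal_eq_lintegral_toReal_rnDeriv_mul hνμ measurable_const,
          ← klDiv_eq_lintegral_klFun_of_ac hνμ]
        simp [elog, hM, m]

lemma lintegral_ofReal_mul_le_sqrt_mul_weighted (μ : Measure α) {a b w : α → ℝ} (ha : Measurable a)
    (hb : Measurable b) (hw : Measurable w) (ha0 : ∀ x, 0 ≤ a x) (hb0 : ∀ x, 0 ≤ b x)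
    (hw0 : ∀ x, 0 < w x) :
    ∫⁻ x, ENNReal.ofReal (a x * b x) ∂μ ≤
      ((∫⁻ x, ENNReal.ofReal (a x ^ 2 * w x) ∂μ) * ∫⁻ x, ENNReal.ofReal (b x ^ 2 / w x) ∂μ)
        ^ (1 / 2 : ℝ) := by
  have hsqrt (x : α) : 0 < √(w x) := sqrt_pos.mpr (hw0 x)
  have h_split (x : α) : ENNReal.ofReal (a x * b x)
      = ENNReal.ofReal (a x * √(w x)) * ENNReal.ofReal (b x / √(w x)) := by
    rw [← ENNReal.ofReal_mul (mul_nonneg (ha0 x) (hsqrt x).le)]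
    field_simp [(hsqrt x).ne']
  have h_sq {c : ℝ} (hc : 0 ≤ c) : ENNReal.ofReal c ^ (2 : ℝ) = ENNReal.ofReal (c ^ 2) := by
    rw [ENNReal.rpow_two, ENNReal.ofReal_pow hc]
  calc ∫⁻ x, ENNReal.ofReal (a x * b x) ∂μ
      = ∫⁻ x, ((fun x ↦ ENNReal.ofReal (a x * √(w x)))
          * fun x ↦ ENNReal.ofReal (b x / √(w x))) x ∂μ := lintegral_congr h_split
    _ ≤ _ := ENNReal.lintegral_mul_le_Lp_mul_Lq μ Real.HolderConjugate.two_two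
        (by fun_prop) (by fun_prop)
    _ = _ := by
        rw [ENNReal.mul_rpow_of_nonneg _ _ (by norm_num)]
        congr 2 <;> refine lintegral_congr fun x ↦ ?_
        · rw [h_sq (mul_nonneg (ha0 x) (hsqrt x).le), mul_pow, sq_sqrt (hw0 x).le]
        · rw [h_sq (div_nonneg (hb0 x) (hsqrt x).le), div_pow, sq_sqrt (hw0 x).le]

lemma lintegral_sq_mul_affine_rnDeriv_le [IsProbabilityMeasure μ] [IsProbabilityMeasure ν]
    (hνμ : ν ≪ μ) {φ : α → ℝ} (hφ : Measurable φ) (c d : ℝ≥0) :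
    ∫⁻ x, ENNReal.ofReal (φ x ^ 2 * (c * (ν.rnDeriv μ x).toReal + d)) ∂μ
      ≤ c * (klDiv ν μ + elog (∫⁻ x, ENNReal.ofReal (exp (φ x ^ 2)) ∂μ))
        + d * elog (∫⁻ x, ENNReal.ofReal (exp (φ x ^ 2)) ∂μ) := by
  have h_split (x : α) : ENNReal.ofReal (φ x ^ 2 * (c * (ν.rnDeriv μ x).toReal + d))
      = c * ENNReal.ofReal ((ν.rnDeriv μ x).toReal * φ x ^ 2)
        + d * ENNReal.ofReal (φ x ^ 2) := by
    rw [← ENNReal.ofReal_coe_nnreal, ← ENNReal.ofReal_coe_nnreal,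
      ← ENNReal.ofReal_mul c.coe_nonneg, ← ENNReal.ofReal_mul d.coe_nonneg,
      ← ENNReal.ofReal_add (by positivity) (by positivity)]
    ring_nf
  have hφ2 : Measurable fun x ↦ φ x ^ 2 := by fun_prop
  have h_dv := lintegral_ofReal_le_klDiv_add_elog (μ := μ) (ν := ν) hφ2 fun x ↦ sq_nonneg _
  have h_dv_self := lintegral_ofReal_le_klDiv_add_elog (μ := μ) (ν := μ) hφ2 fun x ↦ sq_nonneg _
  rw [klDiv_self, zero_add] at h_dv_self
  rw [lintegral_congr h_split, lintegral_add_left (by fun_prop),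
    lintegral_const_mul _ (by fun_prop), lintegral_const_mul _ (by fun_prop),
    ← lintegral_ofReal_eq_lintegral_toReal_rnDeriv_mul hνμ hφ2]
  gcongr

lemma lintegral_mul_abs_rnDeriv_sub_one_le_of_klDiv_le_three [IsProbabilityMeasure μ]
    [IsProbabilityMeasure ν] (hνμ : ν ≪ μ) {φ : α → ℝ} (hφ : Measurable φ) (hφ0 : ∀ x, 0 ≤ φ x)
    (hK : klDiv ν μ ≤ 3) :
    ∫⁻ x, ENNReal.ofReal (φ x * |(ν.rnDeriv μ x).toReal - 1|) ∂μ
      ≤ ((1 + elog (∫⁻ x, ENNReal.ofReal (exp (φ x ^ 2)) ∂μ)) * (2 * klDiv ν μ))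
        ^ (1 / 2 : ℝ) := by
  set F := fun x ↦ (ν.rnDeriv μ x).toReal
  have hF0 (x : α) : 0 ≤ F x := ENNReal.toReal_nonneg
  refine (lintegral_ofReal_mul_le_sqrt_mul_weighted μ hφ (b := fun x ↦ |F x - 1|)
    (w := fun x ↦ 2 * F x + 4) (by fun_prop) (by fun_prop) hφ0 (fun _ ↦ abs_nonneg _)
    (fun x ↦ by linarith [hF0 x])).trans (ENNReal.rpow_le_rpow ?_ (by norm_num))
  have hφ_factor := lintegral_sq_mul_affine_rnDeriv_le hνμ hφ 2 4
  push_cast at hφ_factor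
  have hF_factor : 3 * ∫⁻ x, ENNReal.ofReal (|F x - 1| ^ 2 / (2 * F x + 4)) ∂μ ≤ klDiv ν μ := by
    rw [← lintegral_const_mul _ (by fun_prop), klDiv_eq_lintegral_klFun_of_ac hνμ]
    refine lintegral_mono fun x ↦ ?_
    rw [← ENNReal.ofReal_ofNat, ← ENNReal.ofReal_mul (by norm_num)]
    refine ENNReal.ofReal_le_ofReal ?_
    rw [sq_abs, ← mul_div_assoc, div_le_iff₀ (by linarith [hF0 x])]
    linarith [three_mul_sq_sub_one_le_klFun (hF0 x)]
  set E := elog (∫⁻ x, ENNReal.ofReal (exp (φ x ^ 2)) ∂μ)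
  set K := klDiv ν μ
  rw [← ENNReal.mul_le_mul_iff_right (a := 3) (by norm_num) (by norm_num)]
  calc 3 * ((∫⁻ x, ENNReal.ofReal (φ x ^ 2 * (2 * F x + 4)) ∂μ)
        * ∫⁻ x, ENNReal.ofReal (|F x - 1| ^ 2 / (2 * F x + 4)) ∂μ)
      = (∫⁻ x, ENNReal.ofReal (φ x ^ 2 * (2 * F x + 4)) ∂μ)
        * (3 * ∫⁻ x, ENNReal.ofReal (|F x - 1| ^ 2 / (2 * F x + 4)) ∂μ) := by ring
    _ ≤ (2 * (K + E) + 4 * E) * K := by gcongr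
    _ = 2 * K * K + 6 * E * K := by ring
    _ ≤ 2 * 3 * K + 6 * E * K := by gcongr
    _ = 3 * ((1 + E) * (2 * K)) := by ring

lemma lintegral_mul_abs_rnDeriv_sub_one_le_of_two_le_klDiv [IsProbabilityMeasure μ]
    [IsProbabilityMeasure ν] (hνμ : ν ≪ μ) {φ : α → ℝ} (hφ : Measurable φ) (hφ0 : ∀ x, 0 ≤ φ x)
    (hK : 2 ≤ klDiv ν μ) :
    ∫⁻ x, ENNReal.ofReal (φ x * |(ν.rnDeriv μ x).toReal - 1|) ∂μ
      ≤ ((1 + elog (∫⁻ x, ENNReal.ofReal (exp (φ x ^ 2)) ∂μ)) * (2 * klDiv ν μ))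
        ^ (1 / 2 : ℝ) := by
  set F := fun x ↦ (ν.rnDeriv μ x).toReal
  have hF0 (x : α) : 0 ≤ F x := ENNReal.toReal_nonneg
  refine (lintegral_ofReal_mul_le_sqrt_mul_weighted μ hφ (b := fun x ↦ |F x - 1|)
    (w := fun x ↦ 1 * F x + 1) (by fun_prop) (by fun_prop) hφ0 (fun _ ↦ abs_nonneg _)
    (fun x ↦ by linarith [hF0 x])).trans (ENNReal.rpow_le_rpow ?_ (by norm_num))
  have hφ_factor := lintegral_sq_mul_affine_rnDeriv_le hνμ hφ 1 1
  push_cast at hφ_factor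
  have hF_factor : ∫⁻ x, ENNReal.ofReal (|F x - 1| ^ 2 / (1 * F x + 1)) ∂μ ≤ 2 := calc
    _ ≤ ∫⁻ x, (ENNReal.ofReal (F x * 1) + ENNReal.ofReal 1) ∂μ := by
        refine lintegral_mono fun x ↦ ?_
        rw [← ENNReal.ofReal_add (by simpa using hF0 x) zero_le_one]
        refine ENNReal.ofReal_le_ofReal ?_
        rw [div_le_iff₀ (by linarith [hF0 x]), sq_abs]
        nlinarith [hF0 x]
    _ = 2 := by
        rw [lintegral_add_left (by fun_prop),
          ← lintegral_ofReal_eq_lintegral_toReal_rnDeriv_mul hνμ measurable_const]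
        simp [one_add_one_eq_two]
  set E := elog (∫⁻ x, ENNReal.ofReal (exp (φ x ^ 2)) ∂μ)
  set K := klDiv ν μ
  calc _ ≤ (1 * (K + E) + 1 * E) * 2 := by gcongr
    _ = 2 * K + 2 * 2 * E := by ring
    _ ≤ 2 * K + 2 * K * E := by gcongr
    _ = (1 + E) * (2 * K) := by ring

end

theorem weighted_tv_le_entropy_general {X : Type*} [MeasurableSpace X]
    (μ ν : Measure X) [IsProbabilityMeasure μ] [IsProbabilityMeasure ν]
    (φ : X → ℝ) (hφ_meas : Measurable φ) (hφ_nonneg : ∀ x, 0 ≤ φ x) :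
    ∫⁻ x, ENNReal.ofReal (φ x) ∂(tvMeasure μ ν) ≤
      (1 + elog (∫⁻ x, ENNReal.ofReal (Real.exp (φ x ^ 2)) ∂μ)) ^ (1/2 : ℝ) *
        (2 * relEntropy ν μ) ^ (1/2 : ℝ) := by
  rw [relEntropy_eq_klDiv, ← ENNReal.mul_rpow_of_nonneg _ _ (by norm_num)]
  by_cases hνμ : ν ≪ μ
  swap; · simp [InformationTheory.klDiv_of_not_ac hνμ]
  rw [lintegral_tvMeasure hνμ hφ_meas]
  rcases le_total (InformationTheory.klDiv ν μ) 2 with hK | hK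
  · exact lintegral_mul_abs_rnDeriv_sub_one_le_of_klDiv_le_three hνμ hφ_meas hφ_nonneg
      (hK.trans (by norm_num))
  · exact lintegral_mul_abs_rnDeriv_sub_one_le_of_two_le_klDiv hνμ hφ_meas hφ_nonneg hK

/-- **Bolley–Villani inequality** (Theorem 2.1 of Bolley–Villani): for Borel probability
measures `μ, ν` on a Polish space `X` and a nonnegative Borel function `φ`,
`TV_φ(μ, ν) = ∫ φ d|μ - ν| ≤ (1 + log ∫ e^{φ²} dμ)^{1/2} · √(2 H(ν | μ))`. -/
theorem weighted_tv_le_entropy {X : Type*} [MeasurableSpace X] [TopologicalSpace X] [PolishSpace X] [BorelSpace X]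
    (μ ν : Measure X) [IsProbabilityMeasure μ] [IsProbabilityMeasure ν]
    (φ : X → ℝ) (hφ_meas : Measurable φ) (hφ_nonneg : ∀ x, 0 ≤ φ x) :
    ∫⁻ x, ENNReal.ofReal (φ x) ∂(tvMeasure μ ν) ≤
      (1 + elog (∫⁻ x, ENNReal.ofReal (Real.exp (φ x ^ 2)) ∂μ)) ^ (1/2 : ℝ) *
        (2 * relEntropy ν μ) ^ (1/2 : ℝ) :=
  weighted_tv_le_entropy_general μ ν φ hφ_meas hφ_nonneg

end
end

section
/- Let X be a Polish space, let μ, ν be Borel probability measures on X, and let φ : X → [0,∞) be Borel measurable. Then the weighted total variation admits the coupling representation TV_φ(μ, ν) := ∫_X φ(x) |μ − ν|(dx) = inf over couplings π of μ and ν of ∫_{X×X} (φ(x) + φ(y)) 1_{x ≠ y} π(dx, dy), and the infimum is attained by any coupling π that equals (id, id)_# (μ ∧ ν) on the diagonal {x = y}. -/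
open MeasureTheory ProbabilityTheory MeasurableSpace
open scoped Classical
open scoped ENNReal

noncomputable section

/-! Split a coupling `π` into its parts on and off the diagonal `D`. Both marginals of `π|_D`
equal some `ρ`, and `ρ ≤ μ ⊓ ν` since `μ` and `ν` dominate it; hence the marginals of `π|_Dᶜ`
dominate `μ - μ ⊓ ν` and `ν - μ ⊓ ν`, which are mutually singular and therefore form the Jordan
decomposition of `μ - ν`. The cost of `π` is the integral of `φ` against the two marginals of
`π|_Dᶜ`, so it is at least `TV_φ(μ, ν)`, with equality when `ρ = μ ⊓ ν`. Such a coupling is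
`(id, id)_# (μ ⊓ ν)` plus the normalized product of `μ - μ ⊓ ν` and `ν - μ ⊓ ν`: mutual
singularity means that product puts no mass on the diagonal. -/

section

open Set

namespace MeasureTheory.Measure

variable {α : Type*} [MeasurableSpace α]

lemma disjoint_sub_inf (μ ν : Measure α) [IsFiniteMeasure μ] :
    Disjoint (μ - μ ⊓ ν) (ν - μ ⊓ ν) := by
  have : IsFiniteMeasure (μ ⊓ ν) := isFiniteMeasure_of_le μ inf_le_left
  intro ξ hξμ hξν
  have hle : ξ + μ ⊓ ν ≤ μ ⊓ ν := le_inf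
    ((add_le_add_left hξμ _).trans (sub_add_cancel_of_le inf_le_left).le)
    ((add_le_add_left hξν _).trans (sub_add_cancel_of_le inf_le_right).le)
  have huniv : ξ univ + (μ ⊓ ν) univ ≤ 0 + (μ ⊓ ν) univ := by
    simpa using le_iff'.1 hle univ
  rw [ENNReal.add_le_add_iff_right (measure_ne_top _ _)] at huniv
  exact (measure_univ_eq_zero.1 (le_zero_iff.1 huniv)).le

lemma MutuallySingular.prod_diagonal_eq_zero {μ ν : Measure α} [SFinite ν] (h : μ ⟂ₘ ν) :
    μ.prod ν (diagonal α) = 0 := by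
  have hcover : diagonal α ⊆ h.nullSet ×ˢ univ ∪ univ ×ˢ h.nullSetᶜ := by
    rintro ⟨x, y⟩ (rfl : x = y)
    by_cases hx : x ∈ h.nullSet
    exacts [Or.inl ⟨hx, trivial⟩, Or.inr ⟨trivial, hx⟩]
  refine measure_mono_null hcover (measure_union_null ?_ ?_)
  · rw [prod_prod, h.measure_nullSet, zero_mul]
  · rw [prod_prod, h.measure_compl_nullSet, mul_zero]

lemma eq_sub_of_add_eq {μ ν ξ : Measure α} [IsFiniteMeasure ν] (h : μ + ν = ξ) : μ = ξ - ν := by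
  rw [← h, Measure.add_sub_cancel]

lemma restrict_diagonal_map_diag [MeasurableEq α] (ρ : Measure α) :
    (ρ.map fun x => (x, x)).restrict (diagonal α) = ρ.map fun x => (x, x) := by
  rw [restrict_map (by fun_prop) measurableSet_diagonal]
  simp [diagonal]

end MeasureTheory.Measure

open Measure

variable {α : Type*} [MeasurableSpace α]

lemma tvMeasure_eq_sub_inf_add_sub_inf (μ ν : Measure α) [IsFiniteMeasure μ]
    [IsFiniteMeasure ν] : tvMeasure μ ν = (μ - μ ⊓ ν) + (ν - μ ⊓ ν) := by
  have : IsFiniteMeasure (μ ⊓ ν) := isFiniteMeasure_of_le μ inf_le_left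
  have : IsFiniteMeasure (μ - μ ⊓ ν) := isFiniteMeasure_of_le μ sub_le
  have : IsFiniteMeasure (ν - μ ⊓ ν) := isFiniteMeasure_of_le ν sub_le
  let j : JordanDecomposition α :=
    ⟨μ - μ ⊓ ν, ν - μ ⊓ ν, mutuallySingular_of_disjoint (disjoint_sub_inf μ ν)⟩
  have hj : μ.toSignedMeasure - ν.toSignedMeasure = j.toSignedMeasure := by
    change _ = (μ - μ ⊓ ν).toSignedMeasure - (ν - μ ⊓ ν).toSignedMeasure
    rw [← toSignedMeasure_congr (sub_add_cancel_of_le (inf_le_left : μ ⊓ ν ≤ μ)),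
      ← toSignedMeasure_congr (sub_add_cancel_of_le (inf_le_right : μ ⊓ ν ≤ ν)),
      toSignedMeasure_add, toSignedMeasure_add, add_sub_add_right_eq_sub]
  rw [tvMeasure, SignedMeasure.totalVariation, SignedMeasure.toJordanDecomposition_eq hj]

lemma lintegral_fst_add_snd (π : Measure (α × α)) {f : α → ℝ≥0∞} (hf : Measurable f) :
    ∫⁻ q, f q.1 + f q.2 ∂π = ∫⁻ x, f x ∂π.map Prod.fst + ∫⁻ x, f x ∂π.map Prod.snd := by
  rw [lintegral_map hf measurable_fst, lintegral_map hf measurable_snd]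
  exact lintegral_add_left (hf.comp measurable_fst) _

lemma map_fst_restrict_diagonal [MeasurableEq α] (π : Measure (α × α)) :
    (π.restrict (diagonal α)).map Prod.fst = (π.restrict (diagonal α)).map Prod.snd :=
  map_congr (ae_restrict_mem measurableSet_diagonal)

lemma isCoupling_map_diag (ρ : Measure α) : IsCoupling ρ ρ (ρ.map fun x => (x, x)) := by
  constructor <;> rw [map_map (by fun_prop) (by fun_prop)] <;> exact map_id

lemma isCoupling_smul_prod (μ ν : Measure α) [IsFiniteMeasure μ] [SFinite ν]
    (h : μ univ = ν univ) : IsCoupling μ ν ((μ univ)⁻¹ • μ.prod ν) := by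
  by_cases h0 : μ univ = 0
  · obtain rfl := measure_univ_eq_zero.1 h0
    obtain rfl := measure_univ_eq_zero.1 (h ▸ h0)
    simp [IsCoupling]
  · have hinv : (μ univ)⁻¹ * μ univ = 1 := ENNReal.inv_mul_cancel h0 (measure_ne_top _ _)
    constructor
    · rw [Measure.map_smul, map_fst_prod, smul_smul, ← h, hinv, one_smul]
    · rw [Measure.map_smul, map_snd_prod, smul_smul, hinv, one_smul]

namespace IsCoupling

variable {μ ν μ' ν' : Measure α} {π π' : Measure (α × α)}

lemma add (h : IsCoupling μ ν π) (h' : IsCoupling μ' ν' π') :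
    IsCoupling (μ + μ') (ν + ν') (π + π') :=
  ⟨by rw [Measure.map_add _ _ measurable_fst, h.1, h'.1],
    by rw [Measure.map_add _ _ measurable_snd, h.2, h'.2]⟩

variable [MeasurableEq α]

lemma map_fst_restrict_diagonal_add_map_fst (hπ : IsCoupling μ ν π) :
    (π.restrict (diagonal α)).map Prod.fst + (π.restrict (diagonal α)ᶜ).map Prod.fst = μ := by
  rw [← Measure.map_add _ _ measurable_fst, restrict_add_restrict_compl measurableSet_diagonal,
    hπ.1]

lemma map_fst_restrict_diagonal_add_map_snd (hπ : IsCoupling μ ν π) :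
    (π.restrict (diagonal α)).map Prod.fst + (π.restrict (diagonal α)ᶜ).map Prod.snd = ν := by
  rw [map_fst_restrict_diagonal, ← Measure.map_add _ _ measurable_snd,
    restrict_add_restrict_compl measurableSet_diagonal, hπ.2]

lemma map_fst_restrict_diagonal_le_inf (hπ : IsCoupling μ ν π) :
    (π.restrict (diagonal α)).map Prod.fst ≤ μ ⊓ ν :=
  le_inf (hπ.map_fst_restrict_diagonal_add_map_fst ▸ Measure.le_add_right le_rfl)
    (hπ.map_fst_restrict_diagonal_add_map_snd ▸ Measure.le_add_right le_rfl)

lemma sub_inf_le_map_fst_restrict_compl_diagonal (hπ : IsCoupling μ ν π) :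
    μ - μ ⊓ ν ≤ (π.restrict (diagonal α)ᶜ).map Prod.fst := by
  refine sub_le_of_le_add ?_
  calc μ = (π.restrict (diagonal α)).map Prod.fst + (π.restrict (diagonal α)ᶜ).map Prod.fst :=
        hπ.map_fst_restrict_diagonal_add_map_fst.symm
    _ ≤ μ ⊓ ν + (π.restrict (diagonal α)ᶜ).map Prod.fst :=
        add_le_add_left hπ.map_fst_restrict_diagonal_le_inf _
    _ = (π.restrict (diagonal α)ᶜ).map Prod.fst + μ ⊓ ν := add_comm _ _

lemma sub_inf_le_map_snd_restrict_compl_diagonal (hπ : IsCoupling μ ν π) :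
    ν - μ ⊓ ν ≤ (π.restrict (diagonal α)ᶜ).map Prod.snd := by
  refine sub_le_of_le_add ?_
  calc ν = (π.restrict (diagonal α)).map Prod.fst + (π.restrict (diagonal α)ᶜ).map Prod.snd :=
        hπ.map_fst_restrict_diagonal_add_map_snd.symm
    _ ≤ μ ⊓ ν + (π.restrict (diagonal α)ᶜ).map Prod.snd :=
        add_le_add_left hπ.map_fst_restrict_diagonal_le_inf _
    _ = (π.restrict (diagonal α)ᶜ).map Prod.snd + μ ⊓ ν := add_comm _ _

lemma lintegral_tvMeasure_le [IsFiniteMeasure μ] [IsFiniteMeasure ν] (hπ : IsCoupling μ ν π)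
    {f : α → ℝ≥0∞} (hf : Measurable f) :
    ∫⁻ x, f x ∂tvMeasure μ ν ≤ ∫⁻ q in (diagonal α)ᶜ, f q.1 + f q.2 ∂π := by
  rw [lintegral_fst_add_snd _ hf, tvMeasure_eq_sub_inf_add_sub_inf, lintegral_add_measure]
  exact add_le_add (lintegral_mono' hπ.sub_inf_le_map_fst_restrict_compl_diagonal le_rfl)
    (lintegral_mono' hπ.sub_inf_le_map_snd_restrict_compl_diagonal le_rfl)

lemma map_fst_restrict_compl_diagonal_of_restrict_diagonal_eq [IsFiniteMeasure μ]
    (hπ : IsCoupling μ ν π) (hdiag : π.restrict (diagonal α) = (μ ⊓ ν).map fun x => (x, x)) :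
    (π.restrict (diagonal α)ᶜ).map Prod.fst = μ - μ ⊓ ν := by
  have : IsFiniteMeasure (μ ⊓ ν) := isFiniteMeasure_of_le μ inf_le_left
  refine eq_sub_of_add_eq ?_
  rw [add_comm, ← (isCoupling_map_diag (μ ⊓ ν)).1, ← hdiag,
    hπ.map_fst_restrict_diagonal_add_map_fst]

lemma map_snd_restrict_compl_diagonal_of_restrict_diagonal_eq [IsFiniteMeasure μ]
    (hπ : IsCoupling μ ν π) (hdiag : π.restrict (diagonal α) = (μ ⊓ ν).map fun x => (x, x)) :
    (π.restrict (diagonal α)ᶜ).map Prod.snd = ν - μ ⊓ ν := by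
  have : IsFiniteMeasure (μ ⊓ ν) := isFiniteMeasure_of_le μ inf_le_left
  refine eq_sub_of_add_eq ?_
  rw [add_comm, ← (isCoupling_map_diag (μ ⊓ ν)).1, ← hdiag,
    hπ.map_fst_restrict_diagonal_add_map_snd]

lemma lintegral_compl_diagonal_eq_lintegral_tvMeasure [IsFiniteMeasure μ] [IsFiniteMeasure ν]
    (hπ : IsCoupling μ ν π) (hdiag : π.restrict (diagonal α) = (μ ⊓ ν).map fun x => (x, x))
    {f : α → ℝ≥0∞} (hf : Measurable f) :
    ∫⁻ q in (diagonal α)ᶜ, f q.1 + f q.2 ∂π = ∫⁻ x, f x ∂tvMeasure μ ν := by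
  rw [lintegral_fst_add_snd _ hf, tvMeasure_eq_sub_inf_add_sub_inf, lintegral_add_measure,
    hπ.map_fst_restrict_compl_diagonal_of_restrict_diagonal_eq hdiag,
    hπ.map_snd_restrict_compl_diagonal_of_restrict_diagonal_eq hdiag]

end IsCoupling

lemma exists_isCoupling_restrict_diagonal_eq [MeasurableEq α] (μ ν : Measure α)
    [IsFiniteMeasure μ] [IsFiniteMeasure ν] (h : μ univ = ν univ) :
    ∃ π, IsCoupling μ ν π ∧ π.restrict (diagonal α) = (μ ⊓ ν).map fun x => (x, x) := by
  have : IsFiniteMeasure (μ ⊓ ν) := isFiniteMeasure_of_le μ inf_le_left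
  set d := μ - μ ⊓ ν
  set e := ν - μ ⊓ ν
  have : IsFiniteMeasure d := isFiniteMeasure_of_le μ sub_le
  have hμ : d + μ ⊓ ν = μ := sub_add_cancel_of_le inf_le_left
  have hν : e + μ ⊓ ν = ν := sub_add_cancel_of_le inf_le_right
  have hde : d univ = e univ := by
    rwa [← ENNReal.add_left_inj (measure_ne_top (μ ⊓ ν) univ), ← add_apply, ← add_apply, hμ, hν]
  refine ⟨(μ ⊓ ν).map (fun x => (x, x)) + (d univ)⁻¹ • d.prod e, ?_, ?_⟩
  · have := (isCoupling_map_diag (μ ⊓ ν)).add (isCoupling_smul_prod d e hde)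
    rwa [add_comm (μ ⊓ ν), add_comm (μ ⊓ ν), hμ, hν] at this
  · rw [restrict_add, restrict_diagonal_map_diag, restrict_smul, restrict_eq_zero.2
      (mutuallySingular_of_disjoint (disjoint_sub_inf μ ν)).prod_diagonal_eq_zero,
      smul_zero, add_zero]

end

theorem weighted_tv_coupling_repr_general {X : Type*} [MeasurableSpace X] [TopologicalSpace X] [PolishSpace X] [BorelSpace X]
    (μ ν : Measure X) [IsProbabilityMeasure μ] [IsProbabilityMeasure ν]
    (φ : X → ℝ) (hφ_meas : Measurable φ) :
    (∫⁻ x, ENNReal.ofReal (φ x) ∂(tvMeasure μ ν) =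
      ⨅ (π : Measure (X × X)) (_ : IsCoupling μ ν π),
        ∫⁻ q in {q : X × X | q.1 ≠ q.2},
          (ENNReal.ofReal (φ q.1) + ENNReal.ofReal (φ q.2)) ∂π) ∧
    (∀ π : Measure (X × X), IsCoupling μ ν π →
      π.restrict {q : X × X | q.1 = q.2} = (μ ⊓ ν).map (fun x => (x, x)) →
      ∫⁻ q in {q : X × X | q.1 ≠ q.2},
          (ENNReal.ofReal (φ q.1) + ENNReal.ofReal (φ q.2)) ∂π =
        ∫⁻ x, ENNReal.ofReal (φ x) ∂(tvMeasure μ ν)) := by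
  have hf : Measurable fun x => ENNReal.ofReal (φ x) := hφ_meas.ennreal_ofReal
  obtain ⟨π₀, hπ₀, hπ₀_diag⟩ := exists_isCoupling_restrict_diagonal_eq μ ν (by simp)
  refine ⟨le_antisymm (le_iInf₂ fun π hπ => hπ.lintegral_tvMeasure_le hf) ?_,
    fun π hπ hdiag => hπ.lintegral_compl_diagonal_eq_lintegral_tvMeasure hdiag hf⟩
  exact (iInf₂_le π₀ hπ₀).trans_eq
    (hπ₀.lintegral_compl_diagonal_eq_lintegral_tvMeasure hπ₀_diag hf)

/-- The weighted total variation admits the coupling representation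
`TV_φ(μ, ν) = inf_{π ∈ Cpl(μ,ν)} ∫ (φ(x) + φ(y)) 1_{x ≠ y} dπ`, and the infimum is
attained by any coupling which coincides with `(id, id)_#(μ ∧ ν)` on the diagonal. -/
theorem weighted_tv_coupling_repr {X : Type*} [MeasurableSpace X] [TopologicalSpace X] [PolishSpace X] [BorelSpace X]
    (μ ν : Measure X) [IsProbabilityMeasure μ] [IsProbabilityMeasure ν]
    (φ : X → ℝ) (hφ_meas : Measurable φ) (hφ_nonneg : ∀ x, 0 ≤ φ x) :
    (∫⁻ x, ENNReal.ofReal (φ x) ∂(tvMeasure μ ν) =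
      ⨅ (π : Measure (X × X)) (_ : IsCoupling μ ν π),
        ∫⁻ q in {q : X × X | q.1 ≠ q.2},
          (ENNReal.ofReal (φ q.1) + ENNReal.ofReal (φ q.2)) ∂π) ∧
    (∀ π : Measure (X × X), IsCoupling μ ν π →
      π.restrict {q : X × X | q.1 = q.2} = (μ ⊓ ν).map (fun x => (x, x)) →
      ∫⁻ q in {q : X × X | q.1 ≠ q.2},
          (ENNReal.ofReal (φ q.1) + ENNReal.ofReal (φ q.2)) ∂π =
        ∫⁻ x, ENNReal.ofReal (φ x) ∂(tvMeasure μ ν)) :=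
  weighted_tv_coupling_repr_general μ ν φ hφ_meas

end
end
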